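/- arXiv:1603.04419 — 4 statements merged into one kernel-verified Lean document; each statement's English description precedes it below -/
import Mathlib

section
/- Let A = (a_{ij}) be a D×D real matrix with a_{ij} > 0 for all i, j. Then the projective diameter Δ(A) := sup{d_H(A·u, A·v) : u, v ∈ ℝ^D with all entries strictly positive} is finite and is given by Δ(A) = max{ log( (a_{ij} a_{pq}) / (a_{iq} a_{pj}) ) : 1 ≤ i, j, p, q ≤ D }. -/
/-- The Hilbert projective metric on the interior of the positive orthant of `ℝ^D`:
`d_H(x,y) = log ((max_i x_i/y_i) / (min_i x_i/y_i))`. -/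
noncomputable def dH {D : ℕ} (x y : Fin D → ℝ) : ℝ :=
  Real.log ((⨆ i, x i / y i) / ⨅ i, x i / y i)

/-!
The upper bound: expanding `(Au)_i (Av)_p` and `(Av)_i (Au)_p` as double sums over `j, q`, the
terms compare as `a_ij a_pq ≤ M a_iq a_pj`, where `M` is the largest cross ratio of `A`; choosing
`i` and `p` where `Au/Av` is maximal and minimal gives `exp d_H(Au, Av) ≤ M`. The bound is
approached by `u = e_j + δ 𝟙`, `v = e_q + δ 𝟙` as `δ → 0⁺`: at `δ = 0` the ratio
`((Au)_i/(Av)_i) / ((Au)_p/(Av)_p)` is exactly the cross ratio `a_ij a_pq / (a_iq a_pj)`.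
-/

open Matrix

lemma Matrix.mulVec_pos {n : Type*} [Fintype n] [Nonempty n] {A : Matrix n n ℝ} {u : n → ℝ}
    (hA : ∀ i j, 0 < A i j) (hu : ∀ j, 0 < u j) (i : n) : 0 < (A *ᵥ u) i :=
  Finset.sum_pos (fun j _ => mul_pos (hA i j) (hu j)) Finset.univ_nonempty

lemma Matrix.mulVec_mul_mulVec_le {n : Type*} [Fintype n] {A : Matrix n n ℝ} {u v : n → ℝ}
    {M : ℝ} {i p : n} (hM : ∀ j q, A i j * A p q ≤ M * (A i q * A p j))
    (hu : ∀ j, 0 ≤ u j) (hv : ∀ j, 0 ≤ v j) :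
    (A *ᵥ u) i * (A *ᵥ v) p ≤ M * ((A *ᵥ v) i * (A *ᵥ u) p) := by
  simp only [mulVec, dotProduct]
  rw [Finset.sum_mul_sum, Finset.sum_mul_sum, Finset.sum_comm, Finset.mul_sum]
  refine Finset.sum_le_sum fun q _ => ?_
  rw [Finset.mul_sum]
  refine Finset.sum_le_sum fun j _ => ?_
  calc A i j * u j * (A p q * v q) = A i j * A p q * (u j * v q) := by ring
    _ ≤ M * (A i q * A p j) * (u j * v q) :=
        mul_le_mul_of_nonneg_right (hM j q) (mul_nonneg (hu j) (hv q))
    _ = M * (A i q * v q * (A p j * u j)) := by ring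

section HilbertMetric

variable {D : ℕ}

lemma exists_dH_eq_log [NeZero D] (x y : Fin D → ℝ) :
    ∃ i p, dH x y = Real.log ((x i / y i) / (x p / y p)) := by
  obtain ⟨i, hi⟩ := exists_eq_ciSup_of_finite (f := fun i => x i / y i)
  obtain ⟨p, hp⟩ := exists_eq_ciInf_of_finite (f := fun i => x i / y i)
  exact ⟨i, p, by rw [dH, ← hi, ← hp]⟩

lemma log_ratio_le_dH {x y : Fin D → ℝ} (hx : ∀ i, 0 < x i) (hy : ∀ i, 0 < y i) (i p : Fin D) :
    Real.log ((x i / y i) / (x p / y p)) ≤ dH x y := by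
  have : Nonempty (Fin D) := ⟨i⟩
  have hmin : 0 < ⨅ k, x k / y k := by
    obtain ⟨k, hk⟩ := exists_eq_ciInf_of_finite (f := fun k => x k / y k)
    exact hk ▸ div_pos (hx k) (hy k)
  have hi : x i / y i ≤ ⨆ k, x k / y k := le_ciSup (f := fun k => x k / y k) (Set.finite_range _).bddAbove i
  have hp : ⨅ k, x k / y k ≤ x p / y p := ciInf_le (f := fun k => x k / y k) (Set.finite_range _).bddBelow p
  have hi_pos : 0 < x i / y i := div_pos (hx i) (hy i)
  exact Real.log_le_log (div_pos hi_pos (div_pos (hx p) (hy p)))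
    (div_le_div₀ (hi_pos.le.trans hi) hi hmin hp)

end HilbertMetric

section ProjectiveDiameter

variable {D : ℕ} {A : Matrix (Fin D) (Fin D) ℝ}

lemma dH_mulVec_le_iSup_log_crossRatio [NeZero D] (hA : ∀ i j, 0 < A i j) {u v : Fin D → ℝ}
    (hu : ∀ j, 0 < u j) (hv : ∀ j, 0 < v j) :
    dH (A *ᵥ u) (A *ᵥ v) ≤ ⨆ t : Fin D × Fin D × Fin D × Fin D,
      Real.log ((A t.1 t.2.1 * A t.2.2.1 t.2.2.2) / (A t.1 t.2.2.2 * A t.2.2.1 t.2.1)) := by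
  set Δ := ⨆ t : Fin D × Fin D × Fin D × Fin D,
    Real.log ((A t.1 t.2.1 * A t.2.2.1 t.2.2.2) / (A t.1 t.2.2.2 * A t.2.2.1 t.2.1))
  have hcross : ∀ i j p q, A i j * A p q ≤ Real.exp Δ * (A i q * A p j) := by
    intro i j p q
    have hden : 0 < A i q * A p j := mul_pos (hA i q) (hA p j)
    rw [← div_le_iff₀ hden, ← Real.log_le_iff_le_exp (div_pos (mul_pos (hA i j) (hA p q)) hden)]
    exact le_ciSup (f := fun t : Fin D × Fin D × Fin D × Fin D => Real.log
      ((A t.1 t.2.1 * A t.2.2.1 t.2.2.2) / (A t.1 t.2.2.2 * A t.2.2.1 t.2.1)))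
      (Finite.bddAbove_range _) (i, j, p, q)
  have hx := A.mulVec_pos hA hu
  have hy := A.mulVec_pos hA hv
  obtain ⟨i, p, hip⟩ := exists_dH_eq_log (A *ᵥ u) (A *ᵥ v)
  rw [hip, div_div_div_eq, Real.log_le_iff_le_exp (div_pos (mul_pos (hx i) (hy p))
    (mul_pos (hy i) (hx p))), div_le_iff₀ (mul_pos (hy i) (hx p))]
  exact mulVec_mul_mulVec_le (hcross i · p ·) (hu · |>.le) (hv · |>.le)

lemma log_crossRatio_le_of_forall_dH_mulVec_le (hA : ∀ i j, 0 < A i j) {c : ℝ}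
    (hc : ∀ u v : Fin D → ℝ, (∀ j, 0 < u j) → (∀ j, 0 < v j) → dH (A *ᵥ u) (A *ᵥ v) ≤ c)
    (i j p q : Fin D) : Real.log (A i j * A p q / (A i q * A p j)) ≤ c := by
  have : Nonempty (Fin D) := ⟨i⟩
  let w : Fin D → ℝ → Fin D → ℝ := fun k δ l => (Pi.single k 1 : Fin D → ℝ) l + δ
  have hw_pos : ∀ k, ∀ δ > 0, ∀ l, 0 < w k δ l := fun k δ hδ l => by
    simp only [w, Pi.single_apply]; positivity
  let f : Fin D → Fin D → ℝ → ℝ := fun k l δ => (A *ᵥ w k δ) l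
  have hf_cont : ∀ k l, ContinuousAt (f k l) 0 := fun k l => by
    simp only [f, w]; fun_prop
  have hf_zero : ∀ k l, f k l 0 = A l k := by simp [f, w]
  let r : ℝ → ℝ := fun δ => Real.log ((f j i δ / f q i δ) / (f j p δ / f q p δ))
  have hr_zero : r 0 = Real.log (A i j * A p q / (A i q * A p j)) := by
    simp only [r, hf_zero, div_div_div_eq]
  have hr_cont : ContinuousAt r 0 := by
    have hne : ∀ k l, f k l 0 ≠ 0 := fun k l => hf_zero k l ▸ (hA l k).ne'
    refine (((hf_cont j i).div (hf_cont q i) (hne q i)).div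
      ((hf_cont j p).div (hf_cont q p) (hne q p)) ?_).log ?_
    · exact div_ne_zero (hne j p) (hne q p)
    · exact div_ne_zero (div_ne_zero (hne j i) (hne q i)) (div_ne_zero (hne j p) (hne q p))
  have hr_le : ∀ δ ∈ Set.Ioi 0, r δ ≤ c := fun δ hδ =>
    (log_ratio_le_dH (mulVec_pos hA (hw_pos j δ hδ)) (mulVec_pos hA (hw_pos q δ hδ)) i p).trans
      (hc _ _ (hw_pos j δ hδ) (hw_pos q δ hδ))
  rw [← hr_zero]
  exact le_of_tendsto (hr_cont.tendsto.mono_left nhdsWithin_le_nhds)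
    (eventually_nhdsWithin_of_forall hr_le)

end ProjectiveDiameter

theorem projective_diameter_formula
    (D : ℕ) (hD : 1 ≤ D) (A : Matrix (Fin D) (Fin D) ℝ)
    (hA : ∀ i j, 0 < A i j) :
    BddAbove {d : ℝ | ∃ u v : Fin D → ℝ, (∀ i, 0 < u i) ∧ (∀ i, 0 < v i) ∧
      d = dH (A.mulVec u) (A.mulVec v)} ∧
    sSup {d : ℝ | ∃ u v : Fin D → ℝ, (∀ i, 0 < u i) ∧ (∀ i, 0 < v i) ∧
      d = dH (A.mulVec u) (A.mulVec v)} =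
      ⨆ t : Fin D × Fin D × Fin D × Fin D,
        Real.log ((A t.1 t.2.1 * A t.2.2.1 t.2.2.2) / (A t.1 t.2.2.2 * A t.2.2.1 t.2.1)) := by
  have : NeZero D := ⟨by omega⟩
  set S := {d : ℝ | ∃ u v : Fin D → ℝ, (∀ i, 0 < u i) ∧ (∀ i, 0 < v i) ∧
    d = dH (A.mulVec u) (A.mulVec v)}
  have hS_le : ∀ d ∈ S, d ≤ ⨆ t : Fin D × Fin D × Fin D × Fin D,
      Real.log ((A t.1 t.2.1 * A t.2.2.1 t.2.2.2) / (A t.1 t.2.2.2 * A t.2.2.1 t.2.1)) := by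
    rintro _ ⟨u, v, hu, hv, rfl⟩
    exact dH_mulVec_le_iSup_log_crossRatio hA hu hv
  have hS_bdd : BddAbove S := ⟨_, hS_le⟩
  refine ⟨hS_bdd, le_antisymm (csSup_le ⟨_, 1, 1, fun _ => one_pos, fun _ => one_pos, rfl⟩ hS_le)
    (ciSup_le fun t => ?_)⟩
  exact log_crossRatio_le_of_forall_dH_mulVec_le hA
    (fun u v hu hv => le_csSup hS_bdd ⟨u, v, hu, hv, rfl⟩) _ _ _ _
end

section
/- Let A be a D×D real matrix with all entries strictly positive and let Δ(A) := sup{d_H(A·u, A·v) : u, v ∈ ℝ^D with all entries strictly positive}. Then the normalized map F(x) := (A·x)/‖A·x‖ maps the set E = {x ∈ ℝ^D : all entries of x strictly positive, ‖x‖ = 1} into itself and is a strict contraction with respect to the Hilbert metric: for all x, y ∈ E, d_H(F(x), F(y)) ≤ tanh(Δ(A)/4)·d_H(x, y), where tanh(Δ(A)/4) < 1. -/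
/-- The Euclidean norm on `ℝ^D`. -/
noncomputable def euclNormFin {D : ℕ} (x : Fin D → ℝ) : ℝ :=
  Real.sqrt (∑ i, x i ^ 2)

/-- The projective diameter `Δ(A) = sup {d_H(Au, Av) : u, v ≻ 0}`. -/
noncomputable def projDiam {D : ℕ} (A : Matrix (Fin D) (Fin D) ℝ) : ℝ :=
  sSup {d : ℝ | ∃ u v : Fin D → ℝ, (∀ i, 0 < u i) ∧ (∀ i, 0 < v i) ∧
    d = dH (A.mulVec u) (A.mulVec v)}

/-- The normalized map `F(x) = A x / ‖A x‖`. -/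
noncomputable def Fmap {D : ℕ} (A : Matrix (Fin D) (Fin D) ℝ) (x : Fin D → ℝ) :
    Fin D → ℝ :=
  (euclNormFin (A.mulVec x))⁻¹ • A.mulVec x

/-!
Birkhoff's contraction argument. Let `α y ≤ x ≤ β y` with optimal constants, so that
`d_H(x, y) = log (β / α)`. Then `z = x - α y` and `w = β y - x` are nonnegative and nonzero,
`A z`, `A w` are positive with `d_H(A z, A w) ≤ Δ(A)` (perturb `z`, `w` by `ε 1` and let `ε → 0`),
and up to positive factors `A x = L • A z + A w` and `A y = A z + A w`, where `L = β / α`.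
Each ratio `(A x)_i / (A y)_i` is thus `φ (t_i)` with `φ t = (L t + 1) / (t + 1)` increasing and
`t_i = (A z)_i / (A w)_i ∈ [m, M]`, `log (M / m) = d_H(A z, A w)`. So it remains to show
`log (φ M / φ m) ≤ tanh (log (M / m) / 4) * log L`, a mean value estimate for
`s ↦ log ((M eˢ + 1) / (m eˢ + 1))` between `0` and `log L`: with `E⁴ = M / m` its derivative is
at most `(E² - 1) / (E² + 1) = tanh (log (M / m) / 4)`, which comes down to
`(E² m eˢ - 1)² ≥ 0`.
-/

open Real Matrix

lemma Real.tanh_le_tanh {a b : ℝ} (h : a ≤ b) : tanh a ≤ tanh b := by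
  rwa [← artanh_le_artanh_iff ⟨neg_one_lt_tanh a, tanh_lt_one a⟩
    ⟨neg_one_lt_tanh b, tanh_lt_one b⟩, artanh_tanh, artanh_tanh]

lemma mul_div_mul_add_one_sub_le_tanh {m M s : ℝ} (hm : 0 < m) (hmM : m ≤ M) (hs : 0 < s) :
    M * s / (M * s + 1) - m * s / (m * s + 1) ≤ tanh (log (M / m) / 4) := by
  have hM : 0 < M := hm.trans_le hmM
  set E := exp (log (M / m) / 4) with hE
  have hE4 : M = m * E ^ 4 := by
    rw [hE, ← exp_nat_mul, Nat.cast_ofNat, mul_div_cancel₀ _ four_ne_zero,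
      exp_log (by positivity), mul_div_cancel₀ _ hm.ne']
  have hE1 : 1 ≤ E := one_le_exp (div_nonneg (log_nonneg ((one_le_div hm).2 hmM)) four_pos.le)
  have htanh : tanh (log (M / m) / 4) = (E ^ 2 - 1) / (E ^ 2 + 1) := by
    rw [tanh_eq, ← hE, exp_neg, ← hE]
    field_simp
  rw [htanh, hE4, div_sub_div _ _ (by positivity) (by positivity),
    div_le_div_iff₀ (by positivity) (by positivity)]
  have hu : 0 < m * s := by positivity
  nlinarith [mul_nonneg (mul_nonneg hu.le (sub_nonneg.2 hE1)) (sq_nonneg (E ^ 2 * (m * s) - 1)),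
    mul_nonneg hu.le (sub_nonneg.2 hE1)]

lemma log_sub_log_le_tanh_mul_log {m M L : ℝ} (hm : 0 < m) (hmM : m ≤ M) (hL : 1 ≤ L) :
    log (M * L + 1) - log (m * L + 1) - (log (M + 1) - log (m + 1)) ≤
      tanh (log (M / m) / 4) * log L := by
  have hM : 0 < M := hm.trans_le hmM
  set g : ℝ → ℝ := fun s => log (M * exp s + 1) - log (m * exp s + 1)
  have hg : ∀ s, HasDerivAt g (M * exp s / (M * exp s + 1) - m * exp s / (m * exp s + 1)) s := by
    intro s
    exact ((((hasDerivAt_exp s).const_mul M).add_const 1).log (by positivity)).sub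
      ((((hasDerivAt_exp s).const_mul m).add_const 1).log (by positivity))
  have key := image_sub_le_mul_sub_of_deriv_le (fun s => (hg s).differentiableAt)
    (fun s => (hg s).deriv ▸ mul_div_mul_add_one_sub_le_tanh hm hmM (exp_pos s)) (log_nonneg hL)
  simpa [g, exp_log (zero_lt_one.trans_le hL)] using key

section HilbertMetric

variable {D : ℕ} {u v : Fin D → ℝ}

lemma dH_smul_smul {c c' : ℝ} (hc : 0 < c) (hc' : 0 < c') (u v : Fin D → ℝ) :
    dH (c • u) (c' • v) = dH u v := by
  have h : ∀ i, (c • u) i / (c' • v) i = c / c' * (u i / v i) := fun i => by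
    simp only [Pi.smul_apply, smul_eq_mul, mul_div_mul_comm]
  simp only [dH, h, ← Real.mul_iSup_of_nonneg (div_pos hc hc').le,
    ← Real.mul_iInf_of_nonneg (div_pos hc hc').le, mul_div_mul_left _ _ (div_pos hc hc').ne']

lemma iInf_div_mul_le (hv : ∀ i, 0 < v i) (i : Fin D) : (⨅ j, u j / v j) * v i ≤ u i :=
  (le_div_iff₀ (hv i)).1 (ciInf_le (Finite.bddBelow_range fun j => u j / v j) i)

lemma le_iSup_div_mul (hv : ∀ i, 0 < v i) (i : Fin D) : u i ≤ (⨆ j, u j / v j) * v i :=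
  (div_le_iff₀ (hv i)).1 (le_ciSup (Finite.bddAbove_range fun j => u j / v j) i)

variable [NeZero D]

lemma iInf_div_pos (hu : ∀ i, 0 < u i) (hv : ∀ i, 0 < v i) : 0 < ⨅ i, u i / v i := by
  obtain ⟨i, hi⟩ := exists_eq_ciInf_of_finite (f := fun i => u i / v i)
  exact hi ▸ div_pos (hu i) (hv i)

lemma dH_le_iff (hu : ∀ i, 0 < u i) (hv : ∀ i, 0 < v i) {d : ℝ} :
    dH u v ≤ d ↔ ∀ i j, u i * v j ≤ exp d * (u j * v i) := by
  have hbdd := Finite.bddAbove_range fun i => u i / v i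
  have hI := iInf_div_pos hu hv
  have hS : 0 < ⨆ i, u i / v i := hI.trans_le (ciInf_le_ciSup (Finite.bddBelow_range _) hbdd)
  rw [dH, log_le_iff_le_exp (div_pos hS hI), div_le_iff₀ hI, ciSup_le_iff hbdd]
  refine forall_congr' fun i => ?_
  rw [← div_le_iff₀' (exp_pos d), le_ciInf_iff (Finite.bddBelow_range _)]
  refine forall_congr' fun j => ?_
  rw [div_le_iff₀' (exp_pos d), div_le_iff₀ (hv i),
    show exp d * (u j / v j) * v i = exp d * (u j * v i) / v j by ring, le_div_iff₀ (hv j)]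

lemma dH_le_log_div_of_bounds {lo hi : ℝ} (hlo : 0 < lo) (h_lo : ∀ i, lo ≤ u i / v i)
    (h_hi : ∀ i, u i / v i ≤ hi) : dH u v ≤ log (hi / lo) := by
  have hI : lo ≤ ⨅ i, u i / v i := le_ciInf h_lo
  have hS : (⨆ i, u i / v i) ≤ hi := ciSup_le h_hi
  have hIS : (⨅ i, u i / v i) ≤ ⨆ i, u i / v i :=
    ciInf_le_ciSup (Finite.bddBelow_range _) (Finite.bddAbove_range _)
  exact log_le_log (div_pos (by linarith) (by linarith)) (div_le_div₀ (by linarith) hS hlo hI)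

lemma dH_self (hu : ∀ i, u i ≠ 0) : dH u u = 0 := by
  simp [dH, div_self (hu _)]

end HilbertMetric

section PositiveMatrix

variable {m n : Type*} [Fintype n] {A : Matrix m n ℝ}

lemma mulVec_pos (hA : ∀ i j, 0 < A i j) {z : n → ℝ} (hz : ∀ k, 0 ≤ z k) (hz' : ∃ k, 0 < z k)
    (i : m) : 0 < (A *ᵥ z) i := by
  obtain ⟨k, hk⟩ := hz'
  exact Finset.sum_pos' (fun j _ => mul_nonneg (hA i j).le (hz j))
    ⟨k, Finset.mem_univ k, mul_pos (hA i k) hk⟩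

lemma exists_mulVec_le_mul_mulVec [Finite m] (hA : ∀ i j, 0 < A i j) :
    ∃ κ > 0, ∀ u : n → ℝ, (∀ k, 0 ≤ u k) → ∀ i j, (A *ᵥ u) i ≤ κ * (A *ᵥ u) j := by
  obtain ⟨b, hb⟩ := Finite.bddAbove_range fun p : m × m × n => A p.1 p.2.2 / A p.2.1 p.2.2
  refine ⟨max b 1, by positivity, fun u hu i j => ?_⟩
  simp only [mulVec, dotProduct, Finset.mul_sum, ← mul_assoc]
  refine Finset.sum_le_sum fun k _ => mul_le_mul_of_nonneg_right ?_ (hu k)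
  rw [← div_le_iff₀ (hA j k)]
  exact (hb ⟨(i, j, k), rfl⟩).trans (le_max_left b 1)

lemma mulVec_pos_of_pos [Nonempty n] (hA : ∀ i j, 0 < A i j) {u : n → ℝ} (hu : ∀ k, 0 < u k)
    (i : m) : 0 < (A *ᵥ u) i :=
  mulVec_pos hA (fun k => (hu k).le) ⟨Classical.arbitrary n, hu _⟩ i

end PositiveMatrix

section ProjectiveDiameter

variable {D : ℕ} [NeZero D] {A : Matrix (Fin D) (Fin D) ℝ}

lemma dH_mulVec_le_projDiam (hA : ∀ i j, 0 < A i j) {u v : Fin D → ℝ} (hu : ∀ i, 0 < u i)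
    (hv : ∀ i, 0 < v i) : dH (A *ᵥ u) (A *ᵥ v) ≤ projDiam A := by
  refine le_csSup ?_ ⟨u, v, hu, hv, rfl⟩
  obtain ⟨κ, hκ, hAκ⟩ := exists_mulVec_le_mul_mulVec hA
  refine ⟨log (κ ^ 2), ?_⟩
  rintro _ ⟨u, v, hu, hv, rfl⟩
  have hAu := mulVec_pos_of_pos hA hu
  have hAv := mulVec_pos_of_pos hA hv
  refine (dH_le_iff hAu hAv).2 fun i j => ?_
  rw [exp_log (by positivity)]
  calc (A *ᵥ u) i * (A *ᵥ v) j
      ≤ (κ * (A *ᵥ u) j) * (κ * (A *ᵥ v) i) :=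
        mul_le_mul (hAκ u (fun k => (hu k).le) i j) (hAκ v (fun k => (hv k).le) j i)
          (hAv j).le (mul_pos hκ (hAu j)).le
    _ = κ ^ 2 * ((A *ᵥ u) j * (A *ᵥ v) i) := by ring

lemma dH_mulVec_le_projDiam_of_nonneg (hA : ∀ i j, 0 < A i j) {z w : Fin D → ℝ}
    (hz : ∀ k, 0 ≤ z k) (hw : ∀ k, 0 ≤ w k) (hAz : ∀ i, 0 < (A *ᵥ z) i)
    (hAw : ∀ i, 0 < (A *ᵥ w) i) : dH (A *ᵥ z) (A *ᵥ w) ≤ projDiam A := by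
  refine (dH_le_iff hAz hAw).2 fun i j => ?_
  set r := A *ᵥ (1 : Fin D → ℝ)
  let lhs : ℝ → ℝ := fun ε => ((A *ᵥ z) i + ε * r i) * ((A *ᵥ w) j + ε * r j)
  let rhs : ℝ → ℝ := fun ε => exp (projDiam A) * (((A *ᵥ z) j + ε * r j) * ((A *ᵥ w) i + ε * r i))
  have hperturbed : Set.Ioi 0 ⊆ {ε | lhs ε ≤ rhs ε} := by
    intro ε (hε : 0 < ε)
    have hpos : ∀ v : Fin D → ℝ, (∀ k, 0 ≤ v k) → ∀ k, 0 < (v + ε • 1) k :=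
      fun v hv k => by
        simp only [Pi.add_apply, Pi.smul_apply, Pi.one_apply, smul_eq_mul, mul_one]
        linarith [hv k]
    have := (dH_le_iff (mulVec_pos_of_pos hA (hpos z hz)) (mulVec_pos_of_pos hA (hpos w hw))).1
      (dH_mulVec_le_projDiam hA (hpos z hz) (hpos w hw)) i j
    simpa [mulVec_add, mulVec_smul, r, lhs, rhs] using this
  have hclosed : IsClosed {ε | lhs ε ≤ rhs ε} := isClosed_le (by fun_prop) (by fun_prop)
  have h0 : (0 : ℝ) ∈ closure (Set.Ioi 0) := by rw [closure_Ioi]; exact Set.self_mem_Ici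
  simpa [lhs, rhs] using hclosed.closure_subset_iff.2 hperturbed h0

end ProjectiveDiameter

section Contraction

variable {D : ℕ} [NeZero D]

lemma dH_smul_add_le_tanh_mul_log {p q : Fin D → ℝ} (hp : ∀ i, 0 < p i) (hq : ∀ i, 0 < q i)
    {L : ℝ} (hL : 1 ≤ L) : dH (L • p + q) (p + q) ≤ tanh (dH p q / 4) * log L := by
  set m := ⨅ i, p i / q i
  set M := ⨆ i, p i / q i
  have hm : 0 < m := iInf_div_pos hp hq
  have hmM : m ≤ M := ciInf_le_ciSup (Finite.bddBelow_range _) (Finite.bddAbove_range _)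
  set φ : ℝ → ℝ := fun t => (L * t + 1) / (t + 1)
  have hφ_mono : ∀ s t, 0 ≤ s → s ≤ t → φ s ≤ φ t := fun s t hs hst => by
    rw [div_le_div_iff₀ (by linarith) (by linarith)]
    nlinarith
  have hratio : ∀ i, (L • p + q) i / (p + q) i = φ (p i / q i) := fun i => by
    have := (hq i).ne'
    simp only [φ, Pi.add_apply, Pi.smul_apply, smul_eq_mul]
    field_simp
  have hdH : dH (L • p + q) (p + q) ≤ log (φ M / φ m) :=
    dH_le_log_div_of_bounds (by positivity)
      (fun i => hratio i ▸ hφ_mono _ _ hm.le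
        (ciInf_le (Finite.bddBelow_range fun i => p i / q i) i))
      (fun i => hratio i ▸ hφ_mono _ _ (div_pos (hp i) (hq i)).le
        (le_ciSup (Finite.bddAbove_range fun i => p i / q i) i))
  have hlog : log (φ M / φ m) =
      log (M * L + 1) - log (m * L + 1) - (log (M + 1) - log (m + 1)) := by
    have hM := hm.trans_le hmM
    simp only [φ]
    rw [log_div (by positivity) (by positivity), log_div (by positivity) (by positivity),
      log_div (by positivity) (by positivity)]
    ring_nf
  calc dH (L • p + q) (p + q) ≤ log (φ M / φ m) := hdH
    _ ≤ tanh (dH p q / 4) * log L := hlog ▸ log_sub_log_le_tanh_mul_log hm hmM hL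

variable {A : Matrix (Fin D) (Fin D) ℝ} {x y : Fin D → ℝ}

lemma dH_mulVec_le_tanh_mul_of_iInf_lt_iSup (hA : ∀ i j, 0 < A i j) (hx : ∀ i, 0 < x i)
    (hy : ∀ i, 0 < y i) (hαβ : ⨅ i, x i / y i < ⨆ i, x i / y i) :
    dH (A *ᵥ x) (A *ᵥ y) ≤ tanh (projDiam A / 4) * dH x y := by
  obtain ⟨i₀, hi₀⟩ := exists_eq_ciInf_of_finite (f := fun i => x i / y i)
  obtain ⟨i₁, hi₁⟩ := exists_eq_ciSup_of_finite (f := fun i => x i / y i)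
  set α := ⨅ i, x i / y i
  set β := ⨆ i, x i / y i
  have hα : 0 < α := iInf_div_pos hx hy
  set L := β / α
  have hL : 1 < L := (one_lt_div hα).2 hαβ
  set z := x - α • y
  set w := β • y - x
  have hz_apply : ∀ k, z k = x k - α * y k := fun k => rfl
  have hw_apply : ∀ k, w k = β * y k - x k := fun k => rfl
  have hz : ∀ k, 0 ≤ z k := fun k => by linarith [hz_apply k, iInf_div_mul_le (u := x) hy k]
  have hw : ∀ k, 0 ≤ w k := fun k => by linarith [hw_apply k, le_iSup_div_mul (u := x) hy k]
  have hz₁ : 0 < z i₁ := by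
    rw [hz_apply, (div_eq_iff (hy i₁).ne').1 hi₁]
    nlinarith [hy i₁]
  have hw₀ : 0 < w i₀ := by
    rw [hw_apply, (div_eq_iff (hy i₀).ne').1 hi₀]
    nlinarith [hy i₀]
  have hAz := mulVec_pos hA hz ⟨i₁, hz₁⟩
  have hAw := mulVec_pos hA hw ⟨i₀, hw₀⟩
  have hLzw : L • z + w = (L - 1) • x := by
    simp only [z, w, L, smul_sub, smul_smul, div_mul_cancel₀ β hα.ne']
    module
  have hzw : z + w = (β - α) • y := by
    simp only [z, w]
    module
  calc dH (A *ᵥ x) (A *ᵥ y) = dH (L • A *ᵥ z + A *ᵥ w) (A *ᵥ z + A *ᵥ w) := by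
        rw [← mulVec_smul, ← mulVec_add, ← mulVec_add, hLzw, hzw, mulVec_smul, mulVec_smul,
          dH_smul_smul (sub_pos.2 hL) (sub_pos.2 hαβ)]
    _ ≤ tanh (dH (A *ᵥ z) (A *ᵥ w) / 4) * log L := dH_smul_add_le_tanh_mul_log hAz hAw hL.le
    _ ≤ tanh (projDiam A / 4) * dH x y :=
        mul_le_mul_of_nonneg_right
          (tanh_le_tanh (by linarith [dH_mulVec_le_projDiam_of_nonneg hA hz hw hAz hAw]))
          (log_nonneg hL.le)

theorem dH_mulVec_le_tanh_mul (hA : ∀ i j, 0 < A i j) (hx : ∀ i, 0 < x i) (hy : ∀ i, 0 < y i) :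
    dH (A *ᵥ x) (A *ᵥ y) ≤ tanh (projDiam A / 4) * dH x y := by
  have hα := iInf_div_pos hx hy
  rcases (ciInf_le_ciSup (Finite.bddBelow_range fun i => x i / y i)
    (Finite.bddAbove_range _)).eq_or_lt with hαβ | hαβ
  · have hxy : x = (⨅ i, x i / y i) • y := funext fun i =>
      le_antisymm (by rw [Pi.smul_apply, smul_eq_mul, hαβ]; exact le_iSup_div_mul hy i)
        (iInf_div_mul_le hy i)
    have h := dH_smul_smul hα one_pos (A *ᵥ y) (A *ᵥ y)
    rw [one_smul, dH_self fun i => (mulVec_pos_of_pos hA hy i).ne', ← mulVec_smul, ← hxy] at h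
    rw [h, dH, ← hαβ, div_self hα.ne', log_one, mul_zero]
  · exact dH_mulVec_le_tanh_mul_of_iInf_lt_iSup hA hx hy hαβ

end Contraction

section NormalizedMap

variable {D : ℕ} {A : Matrix (Fin D) (Fin D) ℝ} {x y : Fin D → ℝ}

lemma euclNormFin_smul (c : ℝ) (v : Fin D → ℝ) : euclNormFin (c • v) = |c| * euclNormFin v := by
  simp only [euclNormFin, Pi.smul_apply, smul_eq_mul, mul_pow, ← Finset.mul_sum,
    sqrt_mul (sq_nonneg c), sqrt_sq_eq_abs]

variable [NeZero D]

lemma euclNormFin_pos {v : Fin D → ℝ} (hv : ∀ i, 0 < v i) : 0 < euclNormFin v :=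
  sqrt_pos.2 (Finset.sum_pos (fun i _ => pow_pos (hv i) 2) Finset.univ_nonempty)

lemma Fmap_pos (hAx : ∀ i, 0 < (A *ᵥ x) i) (i : Fin D) : 0 < Fmap A x i :=
  mul_pos (inv_pos.2 (euclNormFin_pos hAx)) (hAx i)

lemma euclNormFin_Fmap (hAx : ∀ i, 0 < (A *ᵥ x) i) : euclNormFin (Fmap A x) = 1 := by
  rw [Fmap, euclNormFin_smul, abs_of_pos (inv_pos.2 (euclNormFin_pos hAx)),
    inv_mul_cancel₀ (euclNormFin_pos hAx).ne']

lemma dH_Fmap (hAx : ∀ i, 0 < (A *ᵥ x) i) (hAy : ∀ i, 0 < (A *ᵥ y) i) :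
    dH (Fmap A x) (Fmap A y) = dH (A *ᵥ x) (A *ᵥ y) :=
  dH_smul_smul (inv_pos.2 (euclNormFin_pos hAx)) (inv_pos.2 (euclNormFin_pos hAy)) _ _

end NormalizedMap

theorem normalized_positive_map_strict_contraction
    (D : ℕ) (hD : 1 ≤ D) (A : Matrix (Fin D) (Fin D) ℝ)
    (hA : ∀ i j, 0 < A i j) :
    (∀ x : Fin D → ℝ, (∀ i, 0 < x i) → euclNormFin x = 1 →
      (∀ i, 0 < Fmap A x i) ∧ euclNormFin (Fmap A x) = 1) ∧
    (∀ x y : Fin D → ℝ, (∀ i, 0 < x i) → euclNormFin x = 1 → (∀ i, 0 < y i) → euclNormFin y = 1 →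
      dH (Fmap A x) (Fmap A y) ≤ Real.tanh (projDiam A / 4) * dH x y) ∧
    Real.tanh (projDiam A / 4) < 1 := by
  have : NeZero D := ⟨by omega⟩
  refine ⟨fun x hx _ => ⟨Fmap_pos (mulVec_pos_of_pos hA hx),
      euclNormFin_Fmap (mulVec_pos_of_pos hA hx)⟩, fun x y hx _ hy _ => ?_, tanh_lt_one _⟩
  rw [dH_Fmap (mulVec_pos_of_pos hA hx) (mulVec_pos_of_pos hA hy)]
  exact dH_mulVec_le_tanh_mul hA hx hy
end

section
/- Let C be a D×D real matrix with nonnegative entries. Then the spectral radius of C is strictly less than 1 if and only if there exists a diagonal D×D real matrix P with all diagonal entries strictly positive such that Cᵀ·P·C − P is negative definite. -/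
open Matrix

/-- The spectral radius of a real square matrix is `< 1` iff every complex eigenvalue
(element of the spectrum of the matrix viewed over `ℂ`) has absolute value `< 1`. -/
def SpectralRadiusLtOne {D : ℕ} (C : Matrix (Fin D) (Fin D) ℝ) : Prop :=
  ∀ mu ∈ spectrum ℂ (C.map (algebraMap ℝ ℂ)), ‖mu‖ < 1

/-!
If `ρ(C) < 1`, Gelfand's formula gives a power with `‖Cⁿ‖_∞ < 1`, so the vector
`v = ∑_{k<n} Cᵏ 𝟙` is positive with `C v < v`; likewise `Cᵀ u < u` for some positive `u`.
Take `P = diag (uᵢ / vᵢ)`. Cauchy–Schwarz weighted by `v` gives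
`(C x)ᵢ² ≤ (C v)ᵢ ∑ⱼ Cᵢⱼ xⱼ² / vⱼ ≤ vᵢ ∑ⱼ Cᵢⱼ xⱼ² / vⱼ`, and summing against `uᵢ / vᵢ` turns the
right-hand side into `∑ⱼ (Cᵀ u)ⱼ xⱼ² / vⱼ < ∑ⱼ uⱼ xⱼ² / vⱼ = xᵀ P x`.

Conversely, if `C z = μ z` with `z ≠ 0`, then `w = |z|` satisfies `|μ| w ≤ C w` entrywise because
`C ≥ 0`; so `|μ| ≥ 1` would give `w ≤ C w` and hence `wᵀ Cᵀ P C w ≥ wᵀ P w`.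
-/

open Filter

theorem spectrum.eventually_norm_pow_lt_one {A : Type*} [NormedRing A] [NormedAlgebra ℂ A]
    [CompleteSpace A] (a : A) (h : ∀ z ∈ spectrum ℂ a, ‖z‖ < 1) :
    ∀ᶠ n : ℕ in atTop, ‖a ^ n‖ < 1 := by
  cases subsingleton_or_nontrivial A
  · exact .of_forall fun n => by simp [Subsingleton.elim (a ^ n) 0]
  have hρ : spectralRadius ℂ a < 1 :=
    spectrum.spectralRadius_lt_of_forall_lt a fun z hz => by exact_mod_cast h z hz
  filter_upwards [(pow_nnnorm_pow_one_div_tendsto_nhds_spectralRadius a).eventually_lt_const hρ,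
    eventually_ge_atTop 1] with n hn hn1
  by_contra! h1
  exact hn.not_ge (ENNReal.one_le_rpow (by exact_mod_cast h1) (by positivity))

namespace Matrix

variable {ι : Type*} [Fintype ι]

theorem mulVec_nonneg {m n α : Type*} [Fintype n] [Semiring α] [PartialOrder α] [IsOrderedRing α]
    {A : Matrix m n α} (hA : ∀ i j, 0 ≤ A i j) {v : n → α} (hv : 0 ≤ v) : 0 ≤ A *ᵥ v :=
  fun i => Finset.sum_nonneg fun j _ => mul_nonneg (hA i j) (hv j)

theorem spectrum_transpose [DecidableEq ι] {K : Type*} [Field K] (A : Matrix ι ι K) :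
    spectrum K Aᵀ = spectrum K A := by
  ext
  simp only [mem_spectrum_iff_isRoot_charpoly, charpoly_transpose]

theorem exists_mulVec_eq_smul_of_mem_spectrum [DecidableEq ι] {K : Type*} [Field K]
    {A : Matrix ι ι K} {μ : K} (h : μ ∈ spectrum K A) : ∃ v ≠ 0, A *ᵥ v = μ • v := by
  rw [← spectrum_toLin', ← Module.End.hasEigenvalue_iff_mem_spectrum] at h
  obtain ⟨v, hv⟩ := h.exists_hasEigenvector
  exact ⟨v, hv.2, by simpa using hv.apply_eq_smul⟩

section LinftyOpNorm

attribute [local instance] Matrix.linftyOpNormedRing Matrix.linftyOpNormedAlgebra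
attribute [local instance] Matrix.linftyOpSeminormedAddCommGroup

theorem sum_norm_le_linfty_opNorm {m n α : Type*} [Fintype m] [Fintype n]
    [SeminormedAddCommGroup α] (A : Matrix m n α) (i : m) :
    ∑ j, ‖A i j‖ ≤ ‖A‖ := by
  rw [linfty_opNorm_def]
  simpa using NNReal.coe_le_coe.mpr
    (Finset.le_sup (f := fun i => ∑ j, ‖A i j‖₊) (Finset.mem_univ i))

theorem eventually_pow_mulVec_one_lt_one [DecidableEq ι] {C : Matrix ι ι ℝ}
    (h : ∀ z ∈ spectrum ℂ (C.map (algebraMap ℝ ℂ)), ‖z‖ < 1) :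
    ∀ᶠ n : ℕ in atTop, ∀ i, (C ^ n *ᵥ 1) i < 1 := by
  have : CompleteSpace (Matrix ι ι ℂ) := FiniteDimensional.complete ℂ _
  filter_upwards [spectrum.eventually_norm_pow_lt_one _ h] with n hn i
  calc (C ^ n *ᵥ 1) i = ∑ j, (C ^ n) i j := by simp [mulVec, dotProduct]
    _ ≤ ∑ j, ‖(C ^ n) i j‖ := Finset.sum_le_sum fun j _ => Real.le_norm_self _
    _ = ∑ j, ‖(C.map (algebraMap ℝ ℂ) ^ n) i j‖ := by
        simp only [← RingHom.mapMatrix_apply, ← map_pow]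
        simp
    _ ≤ ‖C.map (algebraMap ℝ ℂ) ^ n‖ := sum_norm_le_linfty_opNorm _ i
    _ < 1 := hn

end LinftyOpNorm

theorem exists_pos_mulVec_lt [DecidableEq ι] {C : Matrix ι ι ℝ} (hC : ∀ i j, 0 ≤ C i j) {n : ℕ}
    (hn : ∀ i, (C ^ n *ᵥ 1) i < 1) : ∃ v : ι → ℝ, (∀ i, 0 < v i) ∧ ∀ i, (C *ᵥ v) i < v i := by
  set v := ∑ k ∈ Finset.range n, C ^ k *ᵥ 1
  have hv : 0 ≤ v :=
    Finset.sum_nonneg fun k _ => mulVec_nonneg (pow_apply_nonneg hC k) zero_le_one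
  have htel : C *ᵥ v + 1 = v + C ^ n *ᵥ 1 := by
    simp only [v, mulVec_sum, mulVec_mulVec, ← pow_succ']
    rw [← Finset.sum_range_succ, Finset.sum_range_succ', pow_zero, one_mulVec]
  have hCv (i : ι) : (C *ᵥ v) i + 1 = v i + (C ^ n *ᵥ 1) i := congrFun htel i
  have hCv_nonneg : ∀ i, 0 ≤ (C *ᵥ v) i := mulVec_nonneg hC hv
  refine ⟨v, fun i => ?_, fun i => ?_⟩
  · linarith [hCv i, hn i, hCv_nonneg i]
  · linarith [hCv i, hn i]

theorem dotProduct_transpose_mul_diagonal_mul_sub_diagonal_mulVec [DecidableEq ι]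
    (C : Matrix ι ι ℝ) (d : ι → ℝ) (x : ι → ℝ) :
    x ⬝ᵥ (Cᵀ * diagonal d * C - diagonal d) *ᵥ x
      = ∑ i, d i * (C *ᵥ x) i ^ 2 - ∑ i, d i * x i ^ 2 := by
  have hdiag (y : ι → ℝ) : y ⬝ᵥ diagonal d *ᵥ y = ∑ i, d i * y i ^ 2 :=
    Finset.sum_congr rfl fun i _ => by rw [mulVec_diagonal]; ring
  rw [sub_mulVec, dotProduct_sub, ← mulVec_mulVec, ← mulVec_mulVec, dotProduct_mulVec,
    vecMul_transpose, hdiag, hdiag]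

theorem sq_mulVec_apply_le {m n : Type*} [Fintype n] {C : Matrix m n ℝ} (hC : ∀ i j, 0 ≤ C i j)
    {v : n → ℝ} (hv : ∀ j, 0 < v j) (x : n → ℝ) (i : m) :
    (C *ᵥ x) i ^ 2 ≤ (C *ᵥ v) i * ∑ j, C i j * x j ^ 2 / v j :=
  Finset.sum_sq_le_sum_mul_sum_of_sq_le_mul _ (fun j _ => mul_nonneg (hC i j) (hv j).le)
    (fun j _ => div_nonneg (mul_nonneg (hC i j) (sq_nonneg _)) (hv j).le)
    fun j _ => le_of_eq (by field_simp [(hv j).ne'])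

theorem sum_div_mul_sq_mulVec_lt {C : Matrix ι ι ℝ} (hC : ∀ i j, 0 ≤ C i j) {u v : ι → ℝ}
    (hu : ∀ i, 0 < u i) (hv : ∀ i, 0 < v i) (hCu : ∀ i, (Cᵀ *ᵥ u) i < u i)
    (hCv : ∀ i, (C *ᵥ v) i ≤ v i) {x : ι → ℝ} (hx : x ≠ 0) :
    ∑ i, u i / v i * (C *ᵥ x) i ^ 2 < ∑ i, u i / v i * x i ^ 2 := by
  obtain ⟨k, hk⟩ := Function.ne_iff.mp hx
  calc ∑ i, u i / v i * (C *ᵥ x) i ^ 2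
      ≤ ∑ i, u i / v i * (v i * ∑ j, C i j * x j ^ 2 / v j) := by
        gcongr with i
        · exact div_nonneg (hu i).le (hv i).le
        refine (sq_mulVec_apply_le hC hv x i).trans (mul_le_mul_of_nonneg_right (hCv i) ?_)
        exact Finset.sum_nonneg fun j _ => div_nonneg (mul_nonneg (hC i j) (sq_nonneg _)) (hv j).le
    _ = ∑ j, (Cᵀ *ᵥ u) j * (x j ^ 2 / v j) := by
        simp only [mulVec, dotProduct, transpose_apply, Finset.mul_sum, Finset.sum_mul]
        rw [Finset.sum_comm]
        refine Finset.sum_congr rfl fun j _ => Finset.sum_congr rfl fun i _ => ?_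
        field_simp [(hv i).ne']
    _ < ∑ j, u j * (x j ^ 2 / v j) := by
        refine Finset.sum_lt_sum (fun j _ => ?_) ⟨k, Finset.mem_univ k, ?_⟩
        · exact mul_le_mul_of_nonneg_right (hCu j).le (div_nonneg (sq_nonneg _) (hv j).le)
        · exact mul_lt_mul_of_pos_right (hCu k) (div_pos (sq_pos_of_ne_zero hk) (hv k))
    _ = ∑ i, u i / v i * x i ^ 2 := Finset.sum_congr rfl fun i _ => by ring

theorem norm_mul_norm_le_mulVec_norm {C : Matrix ι ι ℝ} (hC : ∀ i j, 0 ≤ C i j) {μ : ℂ}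
    {z : ι → ℂ} (hz : C.map (algebraMap ℝ ℂ) *ᵥ z = μ • z) (i : ι) :
    ‖μ‖ * ‖z i‖ ≤ (C *ᵥ fun j => ‖z j‖) i :=
  calc ‖μ‖ * ‖z i‖ = ‖(C.map (algebraMap ℝ ℂ) *ᵥ z) i‖ := by rw [hz]; simp
    _ ≤ ∑ j, ‖C.map (algebraMap ℝ ℂ) i j * z j‖ := norm_sum_le _ _
    _ = (C *ᵥ fun j => ‖z j‖) i := by simp [mulVec, dotProduct, abs_of_nonneg (hC _ _)]

theorem lt_one_of_mul_le_mulVec {C : Matrix ι ι ℝ} {d w : ι → ℝ} {r : ℝ} (hd : ∀ i, 0 ≤ d i)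
    (hw : ∀ i, 0 ≤ w i) (hrw : ∀ i, r * w i ≤ (C *ᵥ w) i)
    (hlt : ∑ i, d i * (C *ᵥ w) i ^ 2 < ∑ i, d i * w i ^ 2) : r < 1 := by
  by_contra! hr
  refine hlt.not_ge (Finset.sum_le_sum fun i _ => ?_)
  have : w i ≤ (C *ᵥ w) i := le_trans (le_mul_of_one_le_left (hw i) hr) (hrw i)
  gcongr
  · exact hd i
  · exact hw i

end Matrix

theorem spectral_radius_lt_one_iff_diagonal_lyapunov
    (D : ℕ) (C : Matrix (Fin D) (Fin D) ℝ) (hC : ∀ i j, 0 ≤ C i j) :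
    SpectralRadiusLtOne C ↔
      ∃ P : Matrix (Fin D) (Fin D) ℝ, P.IsDiag ∧ (∀ i, 0 < P i i) ∧
        ∀ x : Fin D → ℝ, x ≠ 0 → x ⬝ᵥ (Cᵀ * P * C - P).mulVec x < 0 := by
  constructor
  · intro h
    have hT : ∀ z ∈ spectrum ℂ (Cᵀ.map (algebraMap ℝ ℂ)), ‖z‖ < 1 := by
      rwa [transpose_map, spectrum_transpose]
    obtain ⟨n, hn⟩ := (eventually_pow_mulVec_one_lt_one h).exists
    obtain ⟨m, hm⟩ := (eventually_pow_mulVec_one_lt_one hT).exists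
    obtain ⟨v, hv, hCv⟩ := exists_pos_mulVec_lt hC hn
    obtain ⟨u, hu, hCu⟩ := exists_pos_mulVec_lt (fun i j => hC j i) hm
    refine ⟨diagonal fun i => u i / v i, isDiag_diagonal _, fun i => ?_, fun x hx => ?_⟩
    · simpa using div_pos (hu i) (hv i)
    · rw [dotProduct_transpose_mul_diagonal_mul_sub_diagonal_mulVec, sub_neg]
      exact sum_div_mul_sq_mulVec_lt hC hu hv hCu (fun i => (hCv i).le) hx
  · rintro ⟨P, hP, hPpos, hPneg⟩ μ hμ
    obtain ⟨z, hz0, hz⟩ := exists_mulVec_eq_smul_of_mem_spectrum hμ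
    have hw : (fun i => ‖z i‖) ≠ 0 := fun h0 =>
      hz0 (funext fun i => norm_eq_zero.mp (congrFun h0 i))
    have hlt := hPneg _ hw
    rw [← hP.diagonal_diag, dotProduct_transpose_mul_diagonal_mul_sub_diagonal_mulVec,
      sub_neg] at hlt
    exact lt_one_of_mul_le_mulVec (fun i => (hPpos i).le) (fun i => norm_nonneg _)
      (norm_mul_norm_le_mulVec_norm hC hz) hlt
end

section
/- Markov processes are reciprocal (finite state space version): let 𝒳 be a nonempty finite set, N ≥ 2, and let p be a probability mass function on (Fin(N+1) → 𝒳) of the form p(x) = π(x_0)·∏_{k=0}^{N−1} Q_k(x_k, x_{k+1}) for a nonnegative function π : 𝒳 → ℝ and nonnegative functions Q_k : 𝒳 × 𝒳 → ℝ. Then for all 0 ≤ t₀ < t₁ ≤ N, the interior variables {X_r : t₀ < r < t₁} and the exterior variables {X_r : r < t₀ or r > t₁} are conditionally independent given (X_{t₀}, X_{t₁}): for every assignment a of the interior coordinates, b of the exterior coordinates, and values c, d ∈ 𝒳 with P(X_{t₀}=c, X_{t₁}=d) > 0, one has P(X_I = a, X_O = b ∣ X_{t₀}=c, X_{t₁}=d)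 = P(X_I = a ∣ X_{t₀}=c, X_{t₁}=d) · P(X_O = b ∣ X_{t₀}=c, X_{t₁}=d), where I = {r : t₀ < r < t₁} and O = {r : r < t₀ or r > t₁}. -/
/-!
Conditional independence of interior and exterior given `(X_{t₀}, X_{t₁})` amounts to
`P(I, O, C) · P(C) = P(I, C) · P(O, C)`, where `C` is the endpoint event. Expand both sides as sums
over pairs of configurations `(x, y)`. Swapping the segment `[t₀, t₁]` between `x` and `y` is an
involution of the pairs, it maps the pairs counted on the right onto those counted on the left, and
it preserves `p x * p y`: every factor of the chain product either stays in one configuration or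
crosses the segment boundary at `t₀` or `t₁`, where `x` and `y` agree.
-/

open Classical in
/-- Probability of an event under a probability mass function `p` on configurations
`Fin (N+1) → 𝒳`: the sum of `p` over all configurations satisfying the event. -/
noncomputable def Pr {N : ℕ} {X : Type} [Fintype X] (p : (Fin (N + 1) → X) → ℝ)
    (A : (Fin (N + 1) → X) → Prop) : ℝ :=
  ∑ x : Fin (N + 1) → X, if A x then p x else 0

theorem div_eq_div_mul_div_of_mul_eq {K : Type*} [Field K] {a b c s : K} (h : a * s = b * c) :
    a / s = b / s * (c / s) := by
  rcases eq_or_ne s 0 with rfl | hs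
  · simp
  · rw [div_mul_div_comm, ← h, mul_div_mul_right _ _ hs]

namespace Finset

variable {ι α : Type*} (s : Finset ι) [∀ i, Decidable (i ∈ s)]

theorem piecewise_piecewise_swap (x y : ι → α) :
    s.piecewise (s.piecewise x y) (s.piecewise y x) = x := by
  simp only [piecewise_idem_left, piecewise_idem_right, piecewise_same]

theorem mul_piecewise_swap_apply {M : Type*} [CommMonoid M] (f : α → M) (x y : ι → α) (i : ι) :
    f (s.piecewise x y i) * f (s.piecewise y x i) = f (x i) * f (y i) := by
  by_cases hi : i ∈ s
  · simp [hi]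
  · simp [hi, mul_comm]

theorem mul_piecewise_swap_apply₂ {M : Type*} [CommMonoid M] (f : α → α → M) (x y : ι → α)
    {i j : ι} (h : (i ∈ s ↔ j ∈ s) ∨ x i = y i ∨ x j = y j) :
    f (s.piecewise x y i) (s.piecewise x y j) * f (s.piecewise y x i) (s.piecewise y x j) =
      f (x i) (x j) * f (y i) (y j) := by
  by_cases hi : i ∈ s <;> by_cases hj : j ∈ s <;> simp only [hi, hj, piecewise_eq_of_mem,
    piecewise_eq_of_notMem, not_false_eq_true, mul_comm] <;>
  rcases h with h | h | h <;> simp_all [mul_comm]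

end Finset

theorem Fin.castSucc_mem_Icc_iff_succ_mem_Icc_or {N : ℕ} (t₀ t₁ : Fin (N + 1)) (k : Fin N) :
    (k.castSucc ∈ Finset.Icc t₀ t₁ ↔ k.succ ∈ Finset.Icc t₀ t₁) ∨ k.castSucc = t₁ ∨ k.succ = t₀ := by
  simp only [Finset.mem_Icc, Fin.le_def, Fin.ext_iff, Fin.val_castSucc, Fin.val_succ]
  omega

section Chain

variable {N : ℕ} {X M : Type*} [CommMonoid M]

def chainWeight (π : X → M) (Q : Fin N → X → X → M) (x : Fin (N + 1) → X) : M :=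
  π (x 0) * ∏ k : Fin N, Q k (x k.castSucc) (x k.succ)

theorem chainWeight_piecewise_mul_piecewise (π : X → M) (Q : Fin N → X → X → M)
    (s : Finset (Fin (N + 1))) [∀ i, Decidable (i ∈ s)] (x y : Fin (N + 1) → X)
    (hxy : ∀ k : Fin N, (k.castSucc ∈ s ↔ k.succ ∈ s) ∨ x k.castSucc = y k.castSucc ∨
      x k.succ = y k.succ) :
    chainWeight π Q (s.piecewise x y) * chainWeight π Q (s.piecewise y x) =
      chainWeight π Q x * chainWeight π Q y := by
  simp only [chainWeight, mul_mul_mul_comm _ (∏ k, _), ← Finset.prod_mul_distrib,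
    s.mul_piecewise_swap_apply, s.mul_piecewise_swap_apply₂ _ _ _ (hxy _)]

theorem chainWeight_piecewise_Icc_mul_piecewise_Icc (π : X → M) (Q : Fin N → X → X → M)
    {t₀ t₁ : Fin (N + 1)} {x y : Fin (N + 1) → X} (h₀ : x t₀ = y t₀) (h₁ : x t₁ = y t₁) :
    chainWeight π Q ((Finset.Icc t₀ t₁).piecewise x y) *
        chainWeight π Q ((Finset.Icc t₀ t₁).piecewise y x) =
      chainWeight π Q x * chainWeight π Q y := by
  refine chainWeight_piecewise_mul_piecewise π Q _ x y fun k => ?_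
  rcases Fin.castSucc_mem_Icc_iff_succ_mem_Icc_or t₀ t₁ k with h | h | h
  · exact .inl h
  · exact .inr (.inl (h ▸ h₁))
  · exact .inr (.inr (h ▸ h₀))

end Chain

theorem Pr_mul_Pr_eq_of_involutive {N : ℕ} {X : Type} [Fintype X] (p : (Fin (N + 1) → X) → ℝ)
    {A B C D : (Fin (N + 1) → X) → Prop}
    (Φ : (Fin (N + 1) → X) × (Fin (N + 1) → X) → (Fin (N + 1) → X) × (Fin (N + 1) → X))
    (hΦ : Function.Involutive Φ) (hevent : ∀ z, A z.1 ∧ B z.2 ↔ C (Φ z).1 ∧ D (Φ z).2)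
    (hweight : ∀ z, A z.1 ∧ B z.2 → p (Φ z).1 * p (Φ z).2 = p z.1 * p z.2) :
    Pr p A * Pr p B = Pr p C * Pr p D := by
  classical
  simp only [Pr, Finset.sum_mul_sum, ← Fintype.sum_prod_type', ite_zero_mul_ite_zero]
  refine Fintype.sum_bijective Φ hΦ.bijective _ _ fun z => ?_
  by_cases hz : A z.1 ∧ B z.2
  · rw [if_pos hz, if_pos ((hevent z).1 hz), hweight z hz]
  · rw [if_neg hz, if_neg (mt (hevent z).2 hz)]

theorem markov_implies_reciprocal_general
    {X : Type} [Fintype X] (N : ℕ)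
    (pi0 : X → ℝ)
    (Q : Fin N → X → X → ℝ)
    (p : (Fin (N + 1) → X) → ℝ)
    (hp : ∀ x, p x = pi0 (x 0) * ∏ k : Fin N, Q k (x k.castSucc) (x k.succ))
    (t₀ t₁ : Fin (N + 1)) (ht : t₀ < t₁)
    (a b : Fin (N + 1) → X) (c d : X) :
    Pr p (fun x => (∀ r, t₀ < r → r < t₁ → x r = a r) ∧
        (∀ r, r < t₀ ∨ t₁ < r → x r = b r) ∧ x t₀ = c ∧ x t₁ = d) /
      Pr p (fun x => x t₀ = c ∧ x t₁ = d) =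
    (Pr p (fun x => (∀ r, t₀ < r → r < t₁ → x r = a r) ∧ x t₀ = c ∧ x t₁ = d) /
      Pr p (fun x => x t₀ = c ∧ x t₁ = d)) *
    (Pr p (fun x => (∀ r, r < t₀ ∨ t₁ < r → x r = b r) ∧ x t₀ = c ∧ x t₁ = d) /
      Pr p (fun x => x t₀ = c ∧ x t₁ = d)) := by
  have hp' : p = chainWeight pi0 Q := funext hp
  set s := Finset.Icc t₀ t₁
  refine div_eq_div_mul_div_of_mul_eq (Eq.symm <| Pr_mul_Pr_eq_of_involutive p
    (fun z => (s.piecewise z.1 z.2, s.piecewise z.2 z.1))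
    (fun z => Prod.ext (s.piecewise_piecewise_swap _ _) (s.piecewise_piecewise_swap _ _))
    (fun z => ?_) (fun z hz => ?_))
  · have hin : ∀ {x y : Fin (N + 1) → X} r, t₀ ≤ r → r ≤ t₁ → s.piecewise x y r = x r :=
      fun r h h' => Finset.piecewise_eq_of_mem _ _ _ (Finset.mem_Icc.2 ⟨h, h'⟩)
    have hout : ∀ {x y : Fin (N + 1) → X} r, r < t₀ ∨ t₁ < r → s.piecewise x y r = y r :=
      fun r hr => Finset.piecewise_eq_of_notMem _ _ _ fun hs =>
        hr.elim (Finset.mem_Icc.1 hs).1.not_gt (Finset.mem_Icc.1 hs).2.not_gt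
    simp +contextual only [hin, hout, le_rfl, ht.le, le_of_lt]
    tauto
  · obtain ⟨⟨-, hx₀, hx₁⟩, -, hy₀, hy₁⟩ := hz
    rw [hp', chainWeight_piecewise_Icc_mul_piecewise_Icc _ _ (hx₀.trans hy₀.symm)
      (hx₁.trans hy₁.symm)]

/-- Markov processes are reciprocal (finite state space version): for a distribution
`p(x) = π(x₀) ∏_{k=0}^{N-1} Q_k(x_k, x_{k+1})`, the interior and exterior variables of
any interval `[t₀, t₁]` are conditionally independent given `(X_{t₀}, X_{t₁})`. -/
theorem markov_implies_reciprocal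
    {X : Type} [Fintype X] [Nonempty X] (N : ℕ) (hN : 2 ≤ N)
    (pi0 : X → ℝ) (hpi0 : ∀ a, 0 ≤ pi0 a)
    (Q : Fin N → X → X → ℝ) (hQ : ∀ k a b, 0 ≤ Q k a b)
    (p : (Fin (N + 1) → X) → ℝ)
    (hp : ∀ x, p x = pi0 (x 0) * ∏ k : Fin N, Q k (x k.castSucc) (x k.succ))
    (hpmf : ∑ x : Fin (N + 1) → X, p x = 1)
    (t₀ t₁ : Fin (N + 1)) (ht : t₀ < t₁)
    (a b : Fin (N + 1) → X) (c d : X)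
    (hpos : 0 < Pr p (fun x => x t₀ = c ∧ x t₁ = d)) :
    Pr p (fun x => (∀ r, t₀ < r → r < t₁ → x r = a r) ∧
        (∀ r, r < t₀ ∨ t₁ < r → x r = b r) ∧ x t₀ = c ∧ x t₁ = d) /
      Pr p (fun x => x t₀ = c ∧ x t₁ = d) =
    (Pr p (fun x => (∀ r, t₀ < r → r < t₁ → x r = a r) ∧ x t₀ = c ∧ x t₁ = d) /
      Pr p (fun x => x t₀ = c ∧ x t₁ = d)) *
    (Pr p (fun x => (∀ r, r < t₀ ∨ t₁ < r → x r = b r) ∧ x t₀ = c ∧ x t₁ = d) /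
      Pr p (fun x => x t₀ = c ∧ x t₁ = d)) :=
  markov_implies_reciprocal_general N pi0 Q p hp t₀ t₁ ht a b c d
end
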